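/- Let k ≥ 2 be an integer. The image of Z_k under q is exactly the punctured disk {ζ ∈ ℂ : 0 < |ζ| < 1/√k}; in particular, every (z₁,z₂,z₃) ∈ Z_k satisfies 0 < |q(z₁,z₂,z₃)| < 1/√k. -/

import Mathlib

open Complex

/-- `q(z₁,z₂,z₃) = (conj z₁)^k · z₂ · z₃ / (|z₁|^k · |z₂|)`. -/
noncomputable def qmap (k : ℕ) (z : ℂ × ℂ × ℂ) : ℂ :=
  (starRingEnd ℂ z.1) ^ k * z.2.1 * z.2.2 /
    (((‖z.1‖ : ℝ) : ℂ) ^ k * ((‖z.2.1‖ : ℝ) : ℂ))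

/-- The level set `Z_k = {(z₁,z₂,z₃) : |z₁|² + k|z₃|² = 1, |z₂| = |z₃|, z₁ ≠ 0, z₂ ≠ 0}`. -/
def Zk (k : ℕ) : Set (ℂ × ℂ × ℂ) :=
  {z | ‖z.1‖ ^ 2 + (k : ℝ) * ‖z.2.2‖ ^ 2 = 1 ∧
       ‖z.2.1‖ = ‖z.2.2‖ ∧ z.1 ≠ 0 ∧ z.2.1 ≠ 0}

lemma abs_qmap (k : ℕ) (z : ℂ × ℂ × ℂ) (h1 : z.1 ≠ 0) (h2 : z.2.1 ≠ 0) :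
    ‖(qmap k z)‖ = ‖z.2.2‖ := by
  have a1 : (0:ℝ) < ‖z.1‖ := norm_pos_iff.mpr h1
  have a2 : (0:ℝ) < ‖z.2.1‖ := norm_pos_iff.mpr h2
  simp only [qmap, norm_div, norm_mul, norm_pow, Complex.norm_conj, Complex.norm_real, Real.norm_eq_abs,
    _root_.abs_of_nonneg (norm_nonneg _)]
  field_simp

lemma mem_disk (k : ℕ) (hk : 2 ≤ k) (r : ℝ) (hr : 0 ≤ r) :
    r < 1 / Real.sqrt k ↔ (k : ℝ) * r ^ 2 < 1 := by
  have hk0 : (0:ℝ) < (k:ℝ) := by positivity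
  have hs : (0:ℝ) < Real.sqrt k := Real.sqrt_pos.mpr hk0
  have hsq : Real.sqrt k * Real.sqrt k = (k:ℝ) := Real.mul_self_sqrt hk0.le
  rw [lt_div_iff₀ hs]
  constructor
  · intro h; nlinarith [mul_nonneg hr hs.le]
  · intro h; nlinarith [mul_self_nonneg (r * Real.sqrt k - 1)]

/-- For `k ≥ 2`, the image of `Z_k` under `q` is exactly the punctured
disk `{ζ : 0 < |ζ| < 1/√k}`; in particular every point of `Z_k` maps into it. -/
theorem qmap_image_Zk (k : ℕ) (hk : 2 ≤ k) :
    qmap k '' Zk k = {ζ : ℂ | 0 < ‖ζ‖ ∧ ‖ζ‖ < 1 / Real.sqrt k} ∧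
    ∀ z ∈ Zk k, 0 < ‖(qmap k z)‖ ∧ ‖(qmap k z)‖ < 1 / Real.sqrt k := by
  have fwd : ∀ z ∈ Zk k, 0 < ‖(qmap k z)‖ ∧
      ‖(qmap k z)‖ < 1 / Real.sqrt k := by
    rintro z ⟨hsum, heq, h1, h2⟩
    rw [abs_qmap k z h1 h2]
    have a1 : (0:ℝ) < ‖z.1‖ := norm_pos_iff.mpr h1
    have a3 : (0:ℝ) < ‖z.2.2‖ := by
      rw [← heq]; exact norm_pos_iff.mpr h2
    refine ⟨a3, (mem_disk k hk _ a3.le).mpr ?_⟩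
    nlinarith
  refine ⟨?_, fwd⟩
  ext ζ
  simp only [Set.mem_image, Set.mem_setOf_eq]
  constructor
  · rintro ⟨z, hz, rfl⟩; exact fwd z hz
  · rintro ⟨h0, h1⟩
    have hζ : ζ ≠ 0 := by
      intro h; rw [h] at h0; simp at h0
    have hlt : (k : ℝ) * ‖ζ‖ ^ 2 < 1 := (mem_disk k hk _ (norm_nonneg _)).mp h1
    set r : ℝ := Real.sqrt (1 - (k:ℝ) * ‖ζ‖ ^ 2) with hr
    have hrpos : 0 < r := Real.sqrt_pos.mpr (by linarith)
    have hrsq : r ^ 2 = 1 - (k:ℝ) * ‖ζ‖ ^ 2 := Real.sq_sqrt (by linarith)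
    refine ⟨((r:ℂ), ((‖ζ‖ : ℝ) : ℂ), ζ), ?_, ?_⟩
    · refine ⟨?_, ?_, ?_, ?_⟩
      · simp only [Complex.norm_real, Real.norm_eq_abs, _root_.abs_of_nonneg hrpos.le]
        linarith
      · simp [Complex.norm_real, Real.norm_eq_abs, _root_.abs_of_nonneg (norm_nonneg ζ)]
      · simp only [Ne, Complex.ofReal_eq_zero]; exact hrpos.ne'
      · simp [norm_ne_zero_iff.mpr hζ]
    · have habs : ‖ζ‖ ≠ 0 := norm_ne_zero_iff.mpr hζ
      have hrne : (r:ℂ) ≠ 0 := by exact_mod_cast hrpos.ne'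
      have habsC : ((‖ζ‖ : ℝ) : ℂ) ≠ 0 := by exact_mod_cast habs
      simp only [qmap, Complex.conj_ofReal, Complex.norm_real, Real.norm_eq_abs, _root_.abs_of_nonneg hrpos.le,
        _root_.abs_of_nonneg (norm_nonneg ζ)]
      field_simp
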